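/- arXiv:1806.08820 — 10 statements merged into one kernel-verified Lean document; each statement's English description precedes it below -/
import Mathlib

section
/- Let V be a real vector space, p and q positive integers, σ = (p + √(p² + 4q))/2, and F : V → V a linear map with F ∘ F = id (an almost product structure). Then each of the two linear maps J = (p/2)·id + ((2σ − p)/2)·F and J = (p/2)·id − ((2σ − p)/2)·F satisfies J ∘ J = p·J + q·id, i.e. F induces two metallic structures on V. -/
/-!
Since `F² = id`, the square of `J = a • id + b • F` is `(a² + b²) • id + 2ab • F`. With `a = p/2` the
`F`-coefficients of `J²` and `p J + q` agree, and the identity coefficients agree exactly when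
`b² = p²/4 + q`. For `b = ±(2σ - p)/2` this is `σ² = pσ + q`, the defining equation of the metallic
number.
-/

namespace LinearMap

variable {R M : Type*} [CommRing R] [AddCommGroup M] [Module R M]

def IsMetallic (p q : R) (J : M →ₗ[R] M) : Prop :=
  ∀ x, J (J x) = p • J x + q • x

theorem isMetallic_smul_id_add_smul_of_involutive {F : M →ₗ[R] M} (hF : Function.Involutive F)
    {p q a b : R} (ha : 2 * a = p) (hab : a ^ 2 + b ^ 2 = p * a + q) :
    IsMetallic p q (a • id + b • F) := by
  intro x
  simp only [add_apply, smul_apply, id_apply, map_add, map_smul, hF x]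
  match_scalars
  · linear_combination hab
  · linear_combination b * ha

end LinearMap

theorem metallicNumber_sq {p q σ : ℝ} (hpq : 0 ≤ p ^ 2 + 4 * q)
    (hσ : σ = (p + √(p ^ 2 + 4 * q)) / 2) : σ ^ 2 = p * σ + q := by
  subst hσ
  linear_combination Real.sq_sqrt hpq / 4

theorem almostProduct_induces_two_metallic_structures_general
    {V : Type*} [AddCommGroup V] [Module ℝ V]
    (p q : ℕ)
    (σ : ℝ) (hσ : σ = ((p : ℝ) + Real.sqrt ((p : ℝ) ^ 2 + 4 * (q : ℝ))) / 2)
    (F : V →ₗ[ℝ] V) (hF : ∀ x : V, F (F x) = x) :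
    (∀ x : V,
      (((p : ℝ) / 2) • (LinearMap.id : V →ₗ[ℝ] V) + ((2 * σ - (p : ℝ)) / 2) • F)
        ((((p : ℝ) / 2) • (LinearMap.id : V →ₗ[ℝ] V) + ((2 * σ - (p : ℝ)) / 2) • F) x)
        = (p : ℝ) • ((((p : ℝ) / 2) • (LinearMap.id : V →ₗ[ℝ] V)
            + ((2 * σ - (p : ℝ)) / 2) • F) x) + (q : ℝ) • x) ∧
    (∀ x : V,
      (((p : ℝ) / 2) • (LinearMap.id : V →ₗ[ℝ] V) - ((2 * σ - (p : ℝ)) / 2) • F)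
        ((((p : ℝ) / 2) • (LinearMap.id : V →ₗ[ℝ] V) - ((2 * σ - (p : ℝ)) / 2) • F) x)
        = (p : ℝ) • ((((p : ℝ) / 2) • (LinearMap.id : V →ₗ[ℝ] V)
            - ((2 * σ - (p : ℝ)) / 2) • F) x) + (q : ℝ) • x) := by
  have hσ_sq : σ ^ 2 = p * σ + q := metallicNumber_sq (by positivity) hσ
  have ha : 2 * ((p : ℝ) / 2) = p := by ring
  have hab : ((p : ℝ) / 2) ^ 2 + ((2 * σ - p) / 2) ^ 2 = p * (p / 2) + q := by
    linear_combination hσ_sq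
  refine ⟨LinearMap.isMetallic_smul_id_add_smul_of_involutive hF ha hab, ?_⟩
  rw [sub_eq_add_neg, ← neg_smul]
  exact LinearMap.isMetallic_smul_id_add_smul_of_involutive hF ha (by rwa [neg_sq])

/-- An almost product structure `F` (`F ∘ F = id`) on a real vector space induces two
metallic structures `J = (p/2)·id ± ((2σ − p)/2)·F`, where `σ = (p + √(p² + 4q))/2`. -/
theorem almostProduct_induces_two_metallic_structures
    {V : Type*} [AddCommGroup V] [Module ℝ V]
    (p q : ℕ) (hp : 0 < p) (hq : 0 < q)
    (σ : ℝ) (hσ : σ = ((p : ℝ) + Real.sqrt ((p : ℝ) ^ 2 + 4 * (q : ℝ))) / 2)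
    (F : V →ₗ[ℝ] V) (hF : ∀ x : V, F (F x) = x) :
    (∀ x : V,
      (((p : ℝ) / 2) • (LinearMap.id : V →ₗ[ℝ] V) + ((2 * σ - (p : ℝ)) / 2) • F)
        ((((p : ℝ) / 2) • (LinearMap.id : V →ₗ[ℝ] V) + ((2 * σ - (p : ℝ)) / 2) • F) x)
        = (p : ℝ) • ((((p : ℝ) / 2) • (LinearMap.id : V →ₗ[ℝ] V)
            + ((2 * σ - (p : ℝ)) / 2) • F) x) + (q : ℝ) • x) ∧
    (∀ x : V,
      (((p : ℝ) / 2) • (LinearMap.id : V →ₗ[ℝ] V) - ((2 * σ - (p : ℝ)) / 2) • F)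
        ((((p : ℝ) / 2) • (LinearMap.id : V →ₗ[ℝ] V) - ((2 * σ - (p : ℝ)) / 2) • F) x)
        = (p : ℝ) • ((((p : ℝ) / 2) • (LinearMap.id : V →ₗ[ℝ] V)
            - ((2 * σ - (p : ℝ)) / 2) • F) x) + (q : ℝ) • x) :=
  almostProduct_induces_two_metallic_structures_general p q σ hσ F hF
end

section
/- Let V be a real vector space, p and q positive integers, σ = (p + √(p² + 4q))/2, and J : V → V a linear map with J ∘ J = p·J + q·id. Define the linear maps l = (−1/(2σ − p))·J + (σ/(2σ − p))·id and m = (1/(2σ − p))·J + ((σ − p)/(2σ − p))·id. Then l + m = id, l ∘ l = l, m ∘ m = m, and l ∘ m = m ∘ l = 0; that is, l and m are complementary projection operators on V. -/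
/-!
The metallic number `σ` and its conjugate `p - σ` are the two distinct roots of `X² - pX - q`, so
`(J - σ)(J - (p - σ)) = 0`. Whenever an element is killed by a product of two distinct linear
factors `(J - a)(J - b)`, the Lagrange interpolation element `m = (J - b) / (a - b)` is idempotent,
with complement `1 - m = (a - J) / (a - b)`; for `a = σ`, `b = p - σ` these are the given `m`
and `l`.
-/

section IdempotentOfQuadratic

variable {K A : Type*} [Field K] [Ring A] [Algebra K A]

theorem isIdempotentElem_inv_sub_smul_sub_smul_one {J : A} {a b : K} (hab : a ≠ b)
    (hJ : (J - a • 1) * (J - b • 1) = 0) :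
    IsIdempotentElem ((a - b)⁻¹ • (J - b • 1)) := by
  have hcompl : 1 - (a - b)⁻¹ • (J - b • 1) = -(a - b)⁻¹ • (J - a • 1) := by
    have hd : (a - b)⁻¹ * (a - b) = 1 := inv_mul_cancel₀ (sub_ne_zero.mpr hab)
    linear_combination (norm := module) -hd • (1 : A)
  rw [isIdempotentElem_iff_one_sub_mul_self, hcompl, smul_mul_smul_comm, hJ, smul_zero]

theorem mul_sub_smul_one_sub_smul_one_eq_zero {J : A} {p q σ : K}
    (hJ : J * J = p • J + q • 1) (hσ : σ ^ 2 = p * σ + q) :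
    (J - σ • 1) * (J - (p - σ) • 1) = 0 := by
  simp only [sub_mul, mul_sub, hJ, smul_mul_assoc, mul_smul_comm, one_mul, mul_one]
  linear_combination (norm := module) -hσ • (1 : A)

end IdempotentOfQuadratic

theorem sq_eq_mul_add_of_eq_add_sqrt_div_two {p q σ : ℝ} (hdisc : 0 ≤ p ^ 2 + 4 * q)
    (hσ : σ = (p + √(p ^ 2 + 4 * q)) / 2) : σ ^ 2 = p * σ + q := by
  subst hσ
  linear_combination Real.sq_sqrt hdisc / 4

theorem metallic_complementary_projections_general
    {V : Type*} [AddCommGroup V] [Module ℝ V]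
    (p q : ℕ) (hq : 0 < q)
    (σ : ℝ) (hσ : σ = ((p : ℝ) + Real.sqrt ((p : ℝ) ^ 2 + 4 * (q : ℝ))) / 2)
    (J : V →ₗ[ℝ] V) (hJ : ∀ x : V, J (J x) = (p : ℝ) • J x + (q : ℝ) • x)
    (l m : V →ₗ[ℝ] V)
    (hl : l = (-1 / (2 * σ - (p : ℝ))) • J + (σ / (2 * σ - (p : ℝ))) • (LinearMap.id : V →ₗ[ℝ] V))
    (hm : m = (1 / (2 * σ - (p : ℝ))) • J
        + ((σ - (p : ℝ)) / (2 * σ - (p : ℝ))) • (LinearMap.id : V →ₗ[ℝ] V)) :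
    l + m = LinearMap.id ∧ l.comp l = l ∧ m.comp m = m ∧ l.comp m = 0 ∧ m.comp l = 0 := by
  have hσ_root : σ ^ 2 = p * σ + q := sq_eq_mul_add_of_eq_add_sqrt_div_two (by positivity) hσ
  have hd : 2 * σ - p ≠ 0 := by
    have hq' : (0 : ℝ) < q := Nat.cast_pos.mpr hq
    rw [show 2 * σ - p = √((p : ℝ) ^ 2 + 4 * q) by rw [hσ]; ring]
    positivity
  have hJ_sq : J * J = (p : ℝ) • J + (q : ℝ) • 1 := LinearMap.ext hJ
  have hm_eq : m = (σ - (p - σ))⁻¹ • (J - (p - σ) • 1) := by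
    rw [hm]
    match_scalars <;> ring
  have hm_idem : IsIdempotentElem m := hm_eq ▸
    isIdempotentElem_inv_sub_smul_sub_smul_one (by contrapose! hd; linarith)
      (mul_sub_smul_one_sub_smul_one_eq_zero hJ_sq hσ_root)
  obtain rfl : l = 1 - m := by
    rw [hl, hm]
    match_scalars
    · ring
    · linear_combination mul_inv_cancel₀ hd
  exact ⟨sub_add_cancel 1 m, hm_idem.one_sub, hm_idem, hm_idem.one_sub_mul_self,
    hm_idem.mul_one_sub_self⟩

/-- On a metallic manifold, the operators
`l = (−1/(2σ − p))·J + (σ/(2σ − p))·id` and `m = (1/(2σ − p))·J + ((σ − p)/(2σ − p))·id`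
are complementary projection operators: `l + m = id`, `l² = l`, `m² = m`, `lm = ml = 0`. -/
theorem metallic_complementary_projections
    {V : Type*} [AddCommGroup V] [Module ℝ V]
    (p q : ℕ) (hp : 0 < p) (hq : 0 < q)
    (σ : ℝ) (hσ : σ = ((p : ℝ) + Real.sqrt ((p : ℝ) ^ 2 + 4 * (q : ℝ))) / 2)
    (J : V →ₗ[ℝ] V) (hJ : ∀ x : V, J (J x) = (p : ℝ) • J x + (q : ℝ) • x)
    (l m : V →ₗ[ℝ] V)
    (hl : l = (-1 / (2 * σ - (p : ℝ))) • J + (σ / (2 * σ - (p : ℝ))) • (LinearMap.id : V →ₗ[ℝ] V))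
    (hm : m = (1 / (2 * σ - (p : ℝ))) • J
        + ((σ - (p : ℝ)) / (2 * σ - (p : ℝ))) • (LinearMap.id : V →ₗ[ℝ] V)) :
    l + m = LinearMap.id ∧ l.comp l = l ∧ m.comp m = m ∧ l.comp m = 0 ∧ m.comp l = 0 :=
  metallic_complementary_projections_general p q hq σ hσ J hJ l m hl hm
end

section
/- Let V be a finite-dimensional real inner product space, W a subspace of V, p and q positive integers, and J : V → V a linear map with J ∘ J = p·J + q·id. Then p·NX = N(TX) + n(NX) for every X ∈ W. -/
open scoped RealInnerProductSpace

namespace Submodule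

variable {𝕜 E : Type*} [RCLike 𝕜] [NormedAddCommGroup E] [InnerProductSpace 𝕜 E]
  (K : Submodule 𝕜 E) [K.HasOrthogonalProjection] (f : E →ₗ[𝕜] E)

theorem starProjection_orthogonal_map_starProjection_add (y : E) :
    Kᗮ.starProjection (f (K.starProjection y)) + Kᗮ.starProjection (f (Kᗮ.starProjection y)) =
      Kᗮ.starProjection (f y) := by
  rw [← map_add, ← map_add, K.starProjection_add_starProjection_orthogonal]

theorem starProjection_orthogonal_map_map_of_mem {a b : 𝕜}
    (hf : ∀ x, f (f x) = a • f x + b • x) {x : E} (hx : x ∈ K) :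
    Kᗮ.starProjection (f (f x)) = a • Kᗮ.starProjection (f x) := by
  rw [hf, map_add, map_smul, map_smul, K.starProjection_orthogonal_apply_eq_zero hx, smul_zero,
    add_zero]

end Submodule

theorem metallic_N_rel_general
    {V : Type*} [NormedAddCommGroup V] [InnerProductSpace ℝ V] [FiniteDimensional ℝ V]
    (W : Submodule ℝ V) (p q : ℕ)
    (J : V →ₗ[ℝ] V) (hJ : ∀ x : V, J (J x) = (p : ℝ) • J x + (q : ℝ) • x)
    (T : V → V) (hT : ∀ x : V, T x = (Submodule.orthogonalProjectionOnto W (J x) : V))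
    (N : V → V) (hN : ∀ x : V, N x = (Submodule.orthogonalProjectionOnto Wᗮ (J x) : V))
    (n : V → V) (hn : ∀ u : V, n u = (Submodule.orthogonalProjectionOnto Wᗮ (J u) : V)) :
    ∀ x ∈ W, (p : ℝ) • N x = N (T x) + n (N x) := by
  intro x hx
  simp only [hT, hN, hn, ← Submodule.starProjection_apply]
  rw [W.starProjection_orthogonal_map_starProjection_add,
    W.starProjection_orthogonal_map_map_of_mem J hJ hx]

/-- For a metallic structure `J` (`J ∘ J = p·J + q·id`) and a subspace `W`,
`p·NX = N(TX) + n(NX)` for every `X ∈ W`. -/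
theorem metallic_N_rel
    {V : Type*} [NormedAddCommGroup V] [InnerProductSpace ℝ V] [FiniteDimensional ℝ V]
    (W : Submodule ℝ V) (p q : ℕ) (hp : 0 < p) (hq : 0 < q)
    (J : V →ₗ[ℝ] V) (hJ : ∀ x : V, J (J x) = (p : ℝ) • J x + (q : ℝ) • x)
    (T : V → V) (hT : ∀ x : V, T x = (Submodule.orthogonalProjectionOnto W (J x) : V))
    (N : V → V) (hN : ∀ x : V, N x = (Submodule.orthogonalProjectionOnto Wᗮ (J x) : V))
    (n : V → V) (hn : ∀ u : V, n u = (Submodule.orthogonalProjectionOnto Wᗮ (J u) : V)) :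
    ∀ x ∈ W, (p : ℝ) • N x = N (T x) + n (N x) :=
  metallic_N_rel_general W p q J hJ T hT N hN n hn
end

section
/- Let V be a finite-dimensional real inner product space, W a subspace of V, p and q positive integers, and J : V → V a linear map with J ∘ J = p·J + q·id. Then p·tU = T(tU) + t(nU) for every U ∈ W⊥. -/
open scoped RealInnerProductSpace

namespace Submodule

variable {𝕜 E : Type*} [RCLike 𝕜] [NormedAddCommGroup E] [InnerProductSpace 𝕜 E]

theorem starProjection_map_eq_add (K : Submodule 𝕜 E) [K.HasOrthogonalProjection]
    (J : E →ₗ[𝕜] E) (x : E) :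
    K.starProjection (J x) =
      K.starProjection (J (K.starProjection x)) + K.starProjection (J (Kᗮ.starProjection x)) := by
  rw [← map_add, ← map_add, starProjection_add_starProjection_orthogonal]

end Submodule

theorem metallic_t_rel_general
    {V : Type*} [NormedAddCommGroup V] [InnerProductSpace ℝ V] [FiniteDimensional ℝ V]
    (W : Submodule ℝ V) (p q : ℕ)
    (J : V →ₗ[ℝ] V) (hJ : ∀ x : V, J (J x) = (p : ℝ) • J x + (q : ℝ) • x)
    (T : V → V) (hT : ∀ x : V, T x = (Submodule.orthogonalProjection W (J x) : V))
    (t : V → V) (ht : ∀ u : V, t u = (Submodule.orthogonalProjection W (J u) : V))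
    (n : V → V) (hn : ∀ u : V, n u = (Submodule.orthogonalProjection Wᗮ (J u) : V)) :
    ∀ u ∈ Wᗮ, (p : ℝ) • t u = T (t u) + t (n u) := by
  intro u hu
  have hu₀ : W.starProjection u = 0 := W.starProjection_apply_eq_zero_iff.mpr hu
  simp only [hT, ht, hn, Submodule.coe_orthogonalProjectionOnto_apply]
  calc (p : ℝ) • W.starProjection (J u)
      = W.starProjection ((p : ℝ) • J u + (q : ℝ) • u) := by simp [hu₀]
    _ = W.starProjection (J (J u)) := by rw [hJ]
    _ = _ := W.starProjection_map_eq_add J (J u)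

/-- For a metallic structure `J` (`J ∘ J = p·J + q·id`) and a subspace `W`,
`p·tU = T(tU) + t(nU)` for every `U ∈ W⊥`. -/
theorem metallic_t_rel
    {V : Type*} [NormedAddCommGroup V] [InnerProductSpace ℝ V] [FiniteDimensional ℝ V]
    (W : Submodule ℝ V) (p q : ℕ) (hp : 0 < p) (hq : 0 < q)
    (J : V →ₗ[ℝ] V) (hJ : ∀ x : V, J (J x) = (p : ℝ) • J x + (q : ℝ) • x)
    (T : V → V) (hT : ∀ x : V, T x = (Submodule.orthogonalProjection W (J x) : V))
    (t : V → V) (ht : ∀ u : V, t u = (Submodule.orthogonalProjection W (J u) : V))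
    (n : V → V) (hn : ∀ u : V, n u = (Submodule.orthogonalProjection Wᗮ (J u) : V)) :
    ∀ u ∈ Wᗮ, (p : ℝ) • t u = T (t u) + t (n u) :=
  metallic_t_rel_general W p q J hJ T hT t ht n hn
end

section
/- Let V be a finite-dimensional real inner product space, W a subspace of V, p and q positive integers, and J : V → V a linear map with J ∘ J = p·J + q·id which is compatible with the inner product, i.e. ⟨JX, Y⟩ = ⟨X, JY⟩ for all X, Y ∈ V. Suppose W is slant with slant angle θ, i.e. ‖TX‖ = cos θ · ‖JX‖ for every X ∈ W. Then ⟨TX, TY⟩ = cos²θ · (p·⟨X, TY⟩ + q·⟨X, Y⟩) for all X, Y ∈ W. -/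
/-! The map `T = P_W ∘ J` is linear and scales norms on `W` by `cos θ` relative to `J`, so by
polarization `⟪TX, TY⟫ = cos²θ ⟪JX, JY⟫`. Compatibility and the metallic identity give
`⟪JX, JY⟫ = ⟪X, J²Y⟫ = p ⟪X, JY⟫ + q ⟪X, Y⟫`, and `⟪X, JY⟫ = ⟪X, TY⟫` because `JY - TY ⊥ W`. -/

open scoped RealInnerProductSpace

theorem inner_map_map_eq_of_norm_eq_mul {E F G : Type*} [AddCommGroup E] [Module ℝ E]
    [NormedAddCommGroup F] [InnerProductSpace ℝ F] [NormedAddCommGroup G] [InnerProductSpace ℝ G]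
    (f : E →ₗ[ℝ] F) (g : E →ₗ[ℝ] G) (W : Submodule ℝ E) (c : ℝ)
    (h : ∀ x ∈ W, ‖f x‖ = c * ‖g x‖) {x y : E} (hx : x ∈ W) (hy : y ∈ W) :
    ⟪f x, f y⟫ = c ^ 2 * ⟪g x, g y⟫ := by
  have hsq : ∀ z ∈ W, ‖f z‖ ^ 2 = c ^ 2 * ‖g z‖ ^ 2 := fun z hz ↦ by rw [h z hz, mul_pow]
  have hxy := hsq (x + y) (W.add_mem hx hy)
  rw [map_add, map_add, norm_add_sq_real, norm_add_sq_real, hsq x hx, hsq y hy] at hxy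
  linarith

theorem LinearMap.IsSymmetric.inner_map_map_of_sq_eq {E : Type*} [NormedAddCommGroup E]
    [InnerProductSpace ℝ E] {J : E →ₗ[ℝ] E} (hsymm : J.IsSymmetric) {a b : ℝ}
    (hJ : ∀ x, J (J x) = a • J x + b • x) (x y : E) :
    ⟪J x, J y⟫ = a * ⟪x, J y⟫ + b * ⟪x, y⟫ := by
  rw [hsymm, hJ, inner_add_right, real_inner_smul_right, real_inner_smul_right]

theorem Submodule.inner_starProjection_right_of_mem {E : Type*} [NormedAddCommGroup E]
    [InnerProductSpace ℝ E] (K : Submodule ℝ E) [K.HasOrthogonalProjection] {x : E} (hx : x ∈ K)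
    (v : E) : ⟪x, K.starProjection v⟫ = ⟪x, v⟫ := by
  rw [← K.inner_starProjection_left_eq_right, K.starProjection_eq_self_iff.mpr hx]

theorem slant_inner_T_T_general
    {V : Type*} [NormedAddCommGroup V] [InnerProductSpace ℝ V] [FiniteDimensional ℝ V]
    (W : Submodule ℝ V) (p q : ℕ)
    (J : V →ₗ[ℝ] V) (hJ : ∀ x : V, J (J x) = (p : ℝ) • J x + (q : ℝ) • x)
    (hcompat : ∀ x y : V, ⟪J x, y⟫ = ⟪x, J y⟫)
    (T : V → V) (hT : ∀ x : V, T x = (W.orthogonalProjection (J x) : V))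
    (θ : ℝ) (hslant : ∀ x ∈ W, ‖T x‖ = Real.cos θ * ‖J x‖) :
    ∀ x ∈ W, ∀ y ∈ W,
      ⟪T x, T y⟫ = Real.cos θ ^ 2 * ((p : ℝ) * ⟪x, T y⟫ + (q : ℝ) * ⟪x, y⟫) := by
  intro x hx y hy
  have hT_apply : ∀ z, T z = (W.starProjection.toLinearMap ∘ₗ J) z := hT
  have hpol := inner_map_map_eq_of_norm_eq_mul _ J W _
    (fun z hz ↦ by rw [← hT_apply]; exact hslant z hz) hx hy
  rw [hT_apply, hT_apply, hpol, LinearMap.IsSymmetric.inner_map_map_of_sq_eq hcompat hJ,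
    LinearMap.comp_apply, ContinuousLinearMap.coe_coe, W.inner_starProjection_right_of_mem hx]

/-- If `W` is a slant subspace with slant angle `θ` for a compatible metallic
structure `J`, then `⟪TX, TY⟫ = cos²θ·(p·⟪X, TY⟫ + q·⟪X, Y⟫)` for all `X, Y ∈ W`. -/
theorem slant_inner_T_T
    {V : Type*} [NormedAddCommGroup V] [InnerProductSpace ℝ V] [FiniteDimensional ℝ V]
    (W : Submodule ℝ V) (p q : ℕ) (hp : 0 < p) (hq : 0 < q)
    (J : V →ₗ[ℝ] V) (hJ : ∀ x : V, J (J x) = (p : ℝ) • J x + (q : ℝ) • x)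
    (hcompat : ∀ x y : V, ⟪J x, y⟫ = ⟪x, J y⟫)
    (T : V → V) (hT : ∀ x : V, T x = (W.orthogonalProjection (J x) : V))
    (θ : ℝ) (hslant : ∀ x ∈ W, ‖T x‖ = Real.cos θ * ‖J x‖) :
    ∀ x ∈ W, ∀ y ∈ W,
      ⟪T x, T y⟫ = Real.cos θ ^ 2 * ((p : ℝ) * ⟪x, T y⟫ + (q : ℝ) * ⟪x, y⟫) :=
  slant_inner_T_T_general W p q J hJ hcompat T hT θ hslant
end

section
/- Let V be a finite-dimensional real inner product space, W a subspace of V, p and q positive integers, and J : V → V a linear map with J ∘ J = p·J + q·id which is compatible with the inner product, i.e. ⟨JX, Y⟩ = ⟨X, JY⟩ for all X, Y ∈ V. Suppose W is slant with slant angle θ, i.e. ‖TX‖ = cos θ · ‖JX‖ for every X ∈ W. Then ⟨NX, NY⟩ = sin²θ · (p·⟨X, TY⟩ + q·⟨X, Y⟩) for all X, Y ∈ W. -/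
open scoped RealInnerProductSpace

/-!
Write `JX = TX + NX`. Since `W ⟂ W⊥`, `⟪JX, JY⟫ = ⟪TX, TY⟫ + ⟪NX, NY⟫`. The slant condition
`‖TX‖ = cos θ ‖JX‖` on `W` polarizes to `⟪TX, TY⟫ = cos²θ ⟪JX, JY⟫`, so
`⟪NX, NY⟫ = sin²θ ⟪JX, JY⟫`. Finally compatibility and the metallic identity give
`⟪JX, JY⟫ = ⟪X, J²Y⟫ = p ⟪X, JY⟫ + q ⟪X, Y⟫`, and `⟪X, JY⟫ = ⟪X, TY⟫` because `X ∈ W`.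
-/

theorem Submodule.inner_eq_inner_starProjection_add_inner_starProjection_orthogonal
    {𝕜 E : Type*} [RCLike 𝕜] [NormedAddCommGroup E] [InnerProductSpace 𝕜 E]
    (K : Submodule 𝕜 E) [K.HasOrthogonalProjection] (u v : E) :
    inner 𝕜 u v = inner 𝕜 (K.starProjection u) (K.starProjection v) +
      inner 𝕜 (Kᗮ.starProjection u) (Kᗮ.starProjection v) := by
  have inner_proj_proj : ∀ (L : Submodule 𝕜 E) [L.HasOrthogonalProjection],
      inner 𝕜 (L.starProjection u) (L.starProjection v) = inner 𝕜 u (L.starProjection v) := by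
    intro L _
    rw [L.inner_starProjection_left_eq_right,
      L.starProjection_eq_self_iff.mpr (L.starProjection_apply_mem v)]
  rw [inner_proj_proj, inner_proj_proj, ← inner_add_right,
    K.starProjection_add_starProjection_orthogonal]

theorem real_inner_map_map_eq_sq_mul_of_norm_eq_mul
    {E F G : Type*} [AddCommGroup E] [Module ℝ E]
    [NormedAddCommGroup F] [InnerProductSpace ℝ F] [NormedAddCommGroup G] [InnerProductSpace ℝ G]
    {W : Submodule ℝ E} (A : E →ₗ[ℝ] F) (B : E →ₗ[ℝ] G) (c : ℝ)
    (h : ∀ x ∈ W, ‖A x‖ = c * ‖B x‖) {x y : E} (hx : x ∈ W) (hy : y ∈ W) :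
    ⟪A x, A y⟫ = c ^ 2 * ⟪B x, B y⟫ := by
  simp only [real_inner_eq_norm_add_mul_self_sub_norm_mul_self_sub_norm_mul_self_div_two,
    ← map_add, h x hx, h y hy, h (x + y) (W.add_mem hx hy)]
  ring

theorem inner_map_map_of_metallic {E : Type*} [NormedAddCommGroup E] [InnerProductSpace ℝ E]
    {J : E →ₗ[ℝ] E} {p q : ℝ} (hJ : ∀ x, J (J x) = p • J x + q • x)
    (hcompat : ∀ x y, ⟪J x, y⟫ = ⟪x, J y⟫) (x y : E) :
    ⟪J x, J y⟫ = p * ⟪x, J y⟫ + q * ⟪x, y⟫ := by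
  rw [hcompat, hJ, inner_add_right, real_inner_smul_right, real_inner_smul_right]

theorem slant_inner_N_N_general
    {V : Type*} [NormedAddCommGroup V] [InnerProductSpace ℝ V] [FiniteDimensional ℝ V]
    (W : Submodule ℝ V) (p q : ℕ)
    (J : V →ₗ[ℝ] V) (hJ : ∀ x : V, J (J x) = (p : ℝ) • J x + (q : ℝ) • x)
    (hcompat : ∀ x y : V, ⟪J x, y⟫ = ⟪x, J y⟫)
    (T : V → V) (hT : ∀ x : V, T x = (Submodule.orthogonalProjection W (J x) : V))
    (N : V → V) (hN : ∀ x : V, N x = (Submodule.orthogonalProjection Wᗮ (J x) : V))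
    (θ : ℝ) (hslant : ∀ x ∈ W, ‖T x‖ = Real.cos θ * ‖J x‖) :
    ∀ x ∈ W, ∀ y ∈ W,
      ⟪N x, N y⟫ = Real.sin θ ^ 2 * ((p : ℝ) * ⟪x, T y⟫ + (q : ℝ) * ⟪x, y⟫) := by
  obtain rfl : T = fun v => W.starProjection (J v) := funext hT
  obtain rfl : N = fun v => Wᗮ.starProjection (J v) := funext hN
  intro x hx y hy
  have hTT : ⟪W.starProjection (J x), W.starProjection (J y)⟫ = Real.cos θ ^ 2 * ⟪J x, J y⟫ :=
    real_inner_map_map_eq_sq_mul_of_norm_eq_mul ((W.starProjection : V →ₗ[ℝ] V) ∘ₗ J) J _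
      hslant hx hy
  have hJJ : ⟪J x, J y⟫ = p * ⟪x, W.starProjection (J y)⟫ + q * ⟪x, y⟫ := by
    rw [inner_map_map_of_metallic hJ hcompat, ← W.inner_starProjection_left_eq_right,
      W.starProjection_eq_self_iff.mpr hx]
  have hsplit := W.inner_eq_inner_starProjection_add_inner_starProjection_orthogonal (J x) (J y)
  rw [← hJJ, Real.sin_sq]
  linarith

/-- If `W` is a slant subspace with slant angle `θ` for a compatible metallic
structure `J`, then `⟪NX, NY⟫ = sin²θ·(p·⟪X, TY⟫ + q·⟪X, Y⟫)` for all `X, Y ∈ W`. -/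
theorem slant_inner_N_N
    {V : Type*} [NormedAddCommGroup V] [InnerProductSpace ℝ V] [FiniteDimensional ℝ V]
    (W : Submodule ℝ V) (p q : ℕ) (hp : 0 < p) (hq : 0 < q)
    (J : V →ₗ[ℝ] V) (hJ : ∀ x : V, J (J x) = (p : ℝ) • J x + (q : ℝ) • x)
    (hcompat : ∀ x y : V, ⟪J x, y⟫ = ⟪x, J y⟫)
    (T : V → V) (hT : ∀ x : V, T x = (Submodule.orthogonalProjection W (J x) : V))
    (N : V → V) (hN : ∀ x : V, N x = (Submodule.orthogonalProjection Wᗮ (J x) : V))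
    (θ : ℝ) (hslant : ∀ x ∈ W, ‖T x‖ = Real.cos θ * ‖J x‖) :
    ∀ x ∈ W, ∀ y ∈ W,
      ⟪N x, N y⟫ = Real.sin θ ^ 2 * ((p : ℝ) * ⟪x, T y⟫ + (q : ℝ) * ⟪x, y⟫) :=
  slant_inner_N_N_general W p q J hJ hcompat T hT N hN θ hslant
end

section
/- Let V be a finite-dimensional real inner product space, W a subspace of V, p and q positive integers, and J : V → V a linear map with J ∘ J = p·J + q·id which is compatible with the inner product, i.e. ⟨JX, Y⟩ = ⟨X, JY⟩ for all X, Y ∈ V. Suppose W is slant with slant angle θ, i.e. ‖TX‖ = cos θ · ‖JX‖ for every X ∈ W. Then T(TX) = cos²θ · (p·TX + q·X) for every X ∈ W. -/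
open scoped RealInnerProductSpace

/-!
Polarizing the slant condition gives `⟪T x, T y⟫ = cos² θ ⟪J x, J y⟫` on `W`. Since `T` is the
compression of the symmetric map `J` to `W`, for `y ∈ W` we get `⟪T (T x), y⟫ = ⟪T x, T y⟫`, while
`⟪J x, J y⟫ = ⟪J (J x), y⟫ = p ⟪T x, y⟫ + q ⟪x, y⟫`. Both sides of the identity lie in `W`, and
they have the same inner product with every vector of `W`.
-/

theorem LinearMap.inner_map_map_eq_sq_mul_of_norm_eq_mul_norm {M E F : Type*} [AddCommGroup M]
    [Module ℝ M] [NormedAddCommGroup E] [InnerProductSpace ℝ E] [NormedAddCommGroup F]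
    [InnerProductSpace ℝ F] (A : M →ₗ[ℝ] E) (B : M →ₗ[ℝ] F)
    (c : ℝ) (h : ∀ x, ‖A x‖ = c * ‖B x‖) (x y : M) : ⟪A x, A y⟫ = c ^ 2 * ⟪B x, B y⟫ := by
  rw [real_inner_eq_norm_add_mul_self_sub_norm_mul_self_sub_norm_mul_self_div_two,
    real_inner_eq_norm_add_mul_self_sub_norm_mul_self_sub_norm_mul_self_div_two,
    ← map_add A, ← map_add B, h, h, h]
  ring

theorem LinearMap.IsSymmetric.inner_map_map_of_map_map_eq {E : Type*} [NormedAddCommGroup E]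
    [InnerProductSpace ℝ E] {J : E →ₗ[ℝ] E} (hJ : J.IsSymmetric) {p q : ℝ}
    (hsq : ∀ x, J (J x) = p • J x + q • x) (x y : E) :
    ⟪J x, J y⟫ = p * ⟪J x, y⟫ + q * ⟪x, y⟫ := by
  rw [← hJ, hsq, inner_add_left, real_inner_smul_left, real_inner_smul_left]

namespace Submodule

variable {𝕜 E : Type*} [RCLike 𝕜] [NormedAddCommGroup E] [InnerProductSpace 𝕜 E]
  (K : Submodule 𝕜 E) [K.HasOrthogonalProjection]

theorem inner_starProjection_left_of_mem (v : E) {w : E} (hw : w ∈ K) :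
    inner 𝕜 (K.starProjection v) w = inner 𝕜 v w := by
  rw [inner_starProjection_left_eq_right, starProjection_eq_self_iff.mpr hw]

theorem inner_starProjection_right_of_mem_s12 {u : E} (hu : u ∈ K) (v : E) :
    inner 𝕜 u (K.starProjection v) = inner 𝕜 u v := by
  rw [← inner_starProjection_left_eq_right, starProjection_eq_self_iff.mpr hu]

end Submodule

theorem slant_T_sq_general
    {V : Type*} [NormedAddCommGroup V] [InnerProductSpace ℝ V] [FiniteDimensional ℝ V]
    (W : Submodule ℝ V) (p q : ℕ)
    (J : V →ₗ[ℝ] V) (hJ : ∀ x : V, J (J x) = (p : ℝ) • J x + (q : ℝ) • x)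
    (hcompat : ∀ x y : V, ⟪J x, y⟫ = ⟪x, J y⟫)
    (T : V → V) (hT : ∀ x : V, T x = (W.orthogonalProjection (J x) : V))
    (θ : ℝ) (hslant : ∀ x ∈ W, ‖T x‖ = Real.cos θ * ‖J x‖) :
    ∀ x ∈ W, T (T x) = Real.cos θ ^ 2 • ((p : ℝ) • T x + (q : ℝ) • x) := by
  obtain rfl : T = fun v => W.starProjection (J v) := funext hT
  set P := W.starProjection
  have hpol : ∀ x ∈ W, ∀ y ∈ W, ⟪P (J x), P (J y)⟫ = Real.cos θ ^ 2 * ⟪J x, J y⟫ :=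
    fun x hx y hy => LinearMap.inner_map_map_eq_sq_mul_of_norm_eq_mul_norm
      ((P.toLinearMap ∘ₗ J) ∘ₗ W.subtype) (J ∘ₗ W.subtype) _ (fun x => hslant x x.2)
      ⟨x, hx⟩ ⟨y, hy⟩
  intro x hx
  have hPJx : P (J x) ∈ W := W.starProjection_apply_mem _
  refine W.eq_starProjection_of_mem_of_inner_eq_zero
    (W.smul_mem _ (W.add_mem (W.smul_mem _ hPJx) (W.smul_mem _ hx))) fun y hy => ?_
  rw [inner_sub_left, sub_eq_zero]
  calc ⟪J (P (J x)), y⟫ = ⟪P (J x), P (J y)⟫ := by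
        rw [hcompat, W.inner_starProjection_right_of_mem_s12 hPJx]
    _ = Real.cos θ ^ 2 * ⟪J x, J y⟫ := hpol x hx y hy
    _ = Real.cos θ ^ 2 * ((p : ℝ) * ⟪P (J x), y⟫ + (q : ℝ) * ⟪x, y⟫) := by
        rw [LinearMap.IsSymmetric.inner_map_map_of_map_map_eq hcompat hJ,
          W.inner_starProjection_left_of_mem _ hy]
    _ = ⟪Real.cos θ ^ 2 • ((p : ℝ) • P (J x) + (q : ℝ) • x), y⟫ := by
        rw [real_inner_smul_left, inner_add_left, real_inner_smul_left, real_inner_smul_left]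

/-- If `W` is a slant subspace with slant angle `θ` for a compatible metallic
structure `J`, then `T² = cos²θ·(p·T + q·id)` on `W`. -/
theorem slant_T_sq
    {V : Type*} [NormedAddCommGroup V] [InnerProductSpace ℝ V] [FiniteDimensional ℝ V]
    (W : Submodule ℝ V) (p q : ℕ) (hp : 0 < p) (hq : 0 < q)
    (J : V →ₗ[ℝ] V) (hJ : ∀ x : V, J (J x) = (p : ℝ) • J x + (q : ℝ) • x)
    (hcompat : ∀ x y : V, ⟪J x, y⟫ = ⟪x, J y⟫)
    (T : V → V) (hT : ∀ x : V, T x = (W.orthogonalProjection (J x) : V))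
    (θ : ℝ) (hslant : ∀ x ∈ W, ‖T x‖ = Real.cos θ * ‖J x‖) :
    ∀ x ∈ W, T (T x) = Real.cos θ ^ 2 • ((p : ℝ) • T x + (q : ℝ) • x) :=
  slant_T_sq_general W p q J hJ hcompat T hT θ hslant
end

section
/- Let V be a finite-dimensional real inner product space, p and q positive integers, and J : V → V a linear map with J ∘ J = p·J + q·id which is compatible with the inner product, i.e. ⟨JX, Y⟩ = ⟨X, JY⟩ for all X, Y ∈ V. Let D₁ and D₂ be mutually orthogonal subspaces of V and W = D₁ ⊕ D₂ their (internal) direct sum. Assume ⟨JX, Y⟩ = 0 for all X ∈ D₁ and Y ∈ D₂, and assume D₁ and D₂ are both slant with the same slant angle θ, i.e. ‖proj_{D_i}(JX)‖ = cos θ · ‖JX‖ for every X ∈ D_i (i = 1, 2). Then W is slant with slant angle θ, i.e. ‖proj_W(JX)‖ = cos θ · ‖JX‖ for every X ∈ W. -/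
/-!
Write `x = x₁ + x₂` with `xᵢ ∈ Dᵢ`. Since `J D₁ ⟂ D₂` and, by symmetry of `J`, `J D₂ ⟂ D₁`,
the projection of `J x` onto `D₁ ⊕ D₂` is the sum of the projections of `J x₁` onto `D₁` and of
`J x₂` onto `D₂`. The metallic identity gives `⟪J x₁, J x₂⟫ = ⟪x₁, p J x₂ + q x₂⟫ = 0`, so both
sides of the slant equation for `x` are Pythagorean sums of those for `x₁` and `x₂`.
-/

open scoped RealInnerProductSpace

namespace Submodule

variable {𝕜 E : Type*} [RCLike 𝕜] [NormedAddCommGroup E] [InnerProductSpace 𝕜 E]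

theorem IsOrtho.starProjection_sup {K₁ K₂ : Submodule 𝕜 E} [K₁.HasOrthogonalProjection]
    [K₂.HasOrthogonalProjection] [(K₁ ⊔ K₂).HasOrthogonalProjection] (h : K₁ ⟂ K₂) (v : E) :
    (K₁ ⊔ K₂).starProjection v = K₁.starProjection v + K₂.starProjection v := by
  refine eq_starProjection_of_mem_of_inner_eq_zero
    (add_mem_sup (K₁.starProjection_apply_mem v) (K₂.starProjection_apply_mem v)) ?_
  rintro _ hw
  obtain ⟨w₁, hw₁, w₂, hw₂, rfl⟩ := mem_sup.1 hw
  have h₂₁ : inner 𝕜 (K₂.starProjection v) w₁ = 0 :=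
    h.symm.inner_eq (K₂.starProjection_apply_mem v) hw₁
  have h₁₂ : inner 𝕜 (K₁.starProjection v) w₂ = 0 :=
    h.inner_eq (K₁.starProjection_apply_mem v) hw₂
  have hv₁ := starProjection_inner_eq_zero (K := K₁) v w₁ hw₁
  have hv₂ := starProjection_inner_eq_zero (K := K₂) v w₂ hw₂
  simp only [sub_add_eq_sub_sub, inner_add_right, inner_sub_left] at hv₁ hv₂ ⊢
  rw [h₂₁, h₁₂]
  linear_combination hv₁ + hv₂

end Submodule

section Slant

variable {V : Type*} [NormedAddCommGroup V] [InnerProductSpace ℝ V]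

theorem LinearMap.IsSymmetric.inner_map_map_eq_zero {J : V →ₗ[ℝ] V} (hsymm : J.IsSymmetric)
    {a b : ℝ} (hJ : ∀ x, J (J x) = a • J x + b • x) {x y : V} (hxy : ⟪x, y⟫ = 0)
    (hxJy : ⟪x, J y⟫ = 0) : ⟪J x, J y⟫ = 0 := by
  rw [hsymm, hJ, inner_add_right, real_inner_smul_right, real_inner_smul_right, hxy, hxJy]
  ring

theorem norm_add_eq_mul_norm_add_of_inner_eq_zero {u₁ u₂ w₁ w₂ : V} {c : ℝ}
    (hu : ⟪u₁, u₂⟫ = 0) (hw : ⟪w₁, w₂⟫ = 0) (h₁ : ‖u₁‖ = c * ‖w₁‖) (h₂ : ‖u₂‖ = c * ‖w₂‖) :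
    ‖u₁ + u₂‖ = c * ‖w₁ + w₂‖ := by
  have hsq : ‖u₁ + u₂‖ ^ 2 = (c * ‖w₁ + w₂‖) ^ 2 := by
    rw [norm_add_sq_real, hu, mul_pow, norm_add_sq_real, hw, h₁, h₂]
    ring
  -- If `c < 0`, then `h₁` and `h₂` force `w₁ = w₂ = 0`.
  have hnonneg : 0 ≤ c * ‖w₁ + w₂‖ := by
    rcases le_or_gt 0 c with hc | hc
    · positivity
    · have hw₁ : ‖w₁‖ = 0 := by nlinarith [norm_nonneg u₁, norm_nonneg w₁]
      have hw₂ : ‖w₂‖ = 0 := by nlinarith [norm_nonneg u₂, norm_nonneg w₂]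
      rw [norm_eq_zero.1 hw₁, norm_eq_zero.1 hw₂, add_zero, norm_zero, mul_zero]
  exact (pow_left_inj₀ (norm_nonneg _) hnonneg two_ne_zero).1 hsq

def Submodule.IsSlant (J : V →ₗ[ℝ] V) (D : Submodule ℝ V) [D.HasOrthogonalProjection] (θ : ℝ) :
    Prop :=
  ∀ x ∈ D, ‖D.starProjection (J x)‖ = Real.cos θ * ‖J x‖

theorem Submodule.IsSlant.sup {J : V →ₗ[ℝ] V} (hsymm : J.IsSymmetric) {a b : ℝ}
    (hJ : ∀ x, J (J x) = a • J x + b • x) {D₁ D₂ : Submodule ℝ V} [D₁.HasOrthogonalProjection]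
    [D₂.HasOrthogonalProjection] [(D₁ ⊔ D₂).HasOrthogonalProjection] (horth : D₁ ⟂ D₂)
    (hJorth : ∀ x ∈ D₁, ∀ y ∈ D₂, ⟪J x, y⟫ = 0) {θ : ℝ} (h₁ : D₁.IsSlant J θ)
    (h₂ : D₂.IsSlant J θ) : (D₁ ⊔ D₂).IsSlant J θ := by
  intro x hx
  obtain ⟨x₁, hx₁, x₂, hx₂, rfl⟩ := Submodule.mem_sup.1 hx
  have hJx₁ : J x₁ ∈ D₂ᗮ := fun y hy ↦ by rw [real_inner_comm]; exact hJorth x₁ hx₁ y hy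
  have hJx₂ : J x₂ ∈ D₁ᗮ := fun y hy ↦ by rw [← hsymm]; exact hJorth y hy x₂ hx₂
  have hproj : (D₁ ⊔ D₂).starProjection (J (x₁ + x₂)) =
      D₁.starProjection (J x₁) + D₂.starProjection (J x₂) := by
    rw [horth.starProjection_sup, map_add, map_add, map_add,
      (Submodule.starProjection_apply_eq_zero_iff _).2 hJx₁,
      (Submodule.starProjection_apply_eq_zero_iff _).2 hJx₂, add_zero, zero_add]
  rw [hproj, map_add]
  exact norm_add_eq_mul_norm_add_of_inner_eq_zero
    (horth.inner_eq (D₁.starProjection_apply_mem _) (D₂.starProjection_apply_mem _))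
    (hsymm.inner_map_map_eq_zero hJ (horth.inner_eq hx₁ hx₂) (hJx₂ x₁ hx₁))
    (h₁ x₁ hx₁) (h₂ x₂ hx₂)

end Slant

theorem bislant_equal_angles_is_slant_general
    {V : Type*} [NormedAddCommGroup V] [InnerProductSpace ℝ V] [FiniteDimensional ℝ V]
    (p q : ℕ)
    (J : V →ₗ[ℝ] V) (hJ : ∀ x : V, J (J x) = (p : ℝ) • J x + (q : ℝ) • x)
    (hcompat : ∀ x y : V, ⟪J x, y⟫ = ⟪x, J y⟫)
    (D₁ D₂ : Submodule ℝ V)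
    (horth : ∀ x ∈ D₁, ∀ y ∈ D₂, ⟪x, y⟫ = 0)
    (hJorth : ∀ x ∈ D₁, ∀ y ∈ D₂, ⟪J x, y⟫ = 0)
    (θ : ℝ)
    (hslant₁ : ∀ x ∈ D₁, ‖(Submodule.orthogonalProjectionOnto D₁ (J x) : V)‖ = Real.cos θ * ‖J x‖)
    (hslant₂ : ∀ x ∈ D₂, ‖(Submodule.orthogonalProjectionOnto D₂ (J x) : V)‖ = Real.cos θ * ‖J x‖) :
    ∀ x ∈ D₁ ⊔ D₂, ‖(Submodule.orthogonalProjectionOnto (D₁ ⊔ D₂) (J x) : V)‖ = Real.cos θ * ‖J x‖ :=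
  Submodule.IsSlant.sup hcompat hJ (Submodule.isOrtho_iff_inner_eq.2 horth) hJorth hslant₁ hslant₂

/-- If `D₁` and `D₂` are mutually orthogonal subspaces, both slant with the same slant
angle `θ` for a compatible metallic structure `J`, and `⟪JX, Y⟫ = 0` for `X ∈ D₁`,
`Y ∈ D₂`, then `W = D₁ ⊕ D₂` is slant with slant angle `θ`. -/
theorem bislant_equal_angles_is_slant
    {V : Type*} [NormedAddCommGroup V] [InnerProductSpace ℝ V] [FiniteDimensional ℝ V]
    (p q : ℕ) (hp : 0 < p) (hq : 0 < q)
    (J : V →ₗ[ℝ] V) (hJ : ∀ x : V, J (J x) = (p : ℝ) • J x + (q : ℝ) • x)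
    (hcompat : ∀ x y : V, ⟪J x, y⟫ = ⟪x, J y⟫)
    (D₁ D₂ : Submodule ℝ V)
    (horth : ∀ x ∈ D₁, ∀ y ∈ D₂, ⟪x, y⟫ = 0)
    (hJorth : ∀ x ∈ D₁, ∀ y ∈ D₂, ⟪J x, y⟫ = 0)
    (θ : ℝ)
    (hslant₁ : ∀ x ∈ D₁, ‖(Submodule.orthogonalProjectionOnto D₁ (J x) : V)‖ = Real.cos θ * ‖J x‖)
    (hslant₂ : ∀ x ∈ D₂, ‖(Submodule.orthogonalProjectionOnto D₂ (J x) : V)‖ = Real.cos θ * ‖J x‖) :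
    ∀ x ∈ D₁ ⊔ D₂, ‖(Submodule.orthogonalProjectionOnto (D₁ ⊔ D₂) (J x) : V)‖ = Real.cos θ * ‖J x‖ :=
  bislant_equal_angles_is_slant_general p q J hJ hcompat D₁ D₂ horth hJorth θ hslant₁ hslant₂
end

section
/- Let p and q be positive integers, σ = (p + √(p² + 4q))/2, σ̄ = p − σ, and let J : ℝ⁴ → ℝ⁴ be the linear map J(x₁, x₂, x₃, x₄) = (σx₁, σ̄x₂, σx₃, σ̄x₄). For t ∈ ℝ let Z₁ = (cos t, (σ/√q)·sin t, 0, 0) ∈ ℝ⁴. Then ⟨JZ₁, Z₁⟩ = σ·cos 2t, ‖Z₁‖² = (p·σ·sin²t + q)/q, ‖JZ₁‖² = p·σ·cos²t + q, and ⟨JZ₁, Z₁⟩ / (‖JZ₁‖·‖Z₁‖) = 2√q·cos 2t / √(p²·sin²2t + 4q). -/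
open scoped RealInnerProductSpace

/-!
Writing `Z₁ = (a, b, 0, 0)`, all four quantities are quadratic forms in `(a, b)`, and
`σ² = pσ + q` with `σσ̄ = -q` collapses each of them. In particular
`‖JZ₁‖²‖Z₁‖² = σ²(p² sin² 2t + 4q)/(4q)` is a perfect square, so `‖JZ₁‖‖Z₁‖` has a closed form
and the factor `σ` cancels from the cosine.
-/

noncomputable def metallicMean (p q : ℝ) : ℝ := (p + √(p ^ 2 + 4 * q)) / 2

theorem metallicMean_sq {p q : ℝ} (h : 0 ≤ p ^ 2 + 4 * q) :
    metallicMean p q ^ 2 = p * metallicMean p q + q := by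
  have hs := Real.sq_sqrt h
  unfold metallicMean
  linear_combination hs / 4

theorem metallicMean_pos {p q : ℝ} (hp : 0 ≤ p) (hq : 0 < q) : 0 < metallicMean p q := by
  unfold metallicMean
  have : 0 < √(p ^ 2 + 4 * q) := Real.sqrt_pos.2 (by positivity)
  linarith

theorem EuclideanSpace.real_inner_fin_four (x y : EuclideanSpace ℝ (Fin 4)) :
    ⟪x, y⟫ = x 0 * y 0 + x 1 * y 1 + x 2 * y 2 + x 3 * y 3 := by
  simp only [PiLp.inner_apply, RCLike.inner_apply, conj_trivial, Fin.sum_univ_four]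
  ring

section Metallic

variable {p q σ : ℝ} (hσ : σ ^ 2 = p * σ + q) (hq : 0 < q) (t : ℝ)
include hσ

theorem mul_sub_eq_neg_of_sq_eq : σ * (p - σ) = -q := by
  linear_combination -hσ

include hq

theorem metallic_inner_eq :
    σ * Real.cos t ^ 2 + (p - σ) * (σ / √q * Real.sin t) ^ 2 = σ * Real.cos (2 * t) := by
  have hqs : √q ^ 2 = q := Real.sq_sqrt hq.le
  rw [Real.cos_two_mul', div_mul_eq_mul_div, div_pow, hqs]
  field_simp
  linear_combination σ * Real.sin t ^ 2 * mul_sub_eq_neg_of_sq_eq hσ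

theorem metallic_norm_sq :
    Real.cos t ^ 2 + (σ / √q * Real.sin t) ^ 2 = (p * σ * Real.sin t ^ 2 + q) / q := by
  have hqs : √q ^ 2 = q := Real.sq_sqrt hq.le
  rw [div_mul_eq_mul_div, div_pow, hqs]
  field_simp
  linear_combination Real.sin t ^ 2 * hσ + q * Real.cos_sq_add_sin_sq t

theorem metallic_norm_sq_apply :
    (σ * Real.cos t) ^ 2 + ((p - σ) * (σ / √q * Real.sin t)) ^ 2
      = p * σ * Real.cos t ^ 2 + q := by
  have hqs : √q ^ 2 = q := Real.sq_sqrt hq.le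
  have hconj := mul_sub_eq_neg_of_sq_eq hσ
  rw [div_mul_eq_mul_div, mul_div_assoc', div_pow, hqs]
  field_simp
  linear_combination (σ * (p - σ) - q) * Real.sin t ^ 2 * hconj
    + q * Real.cos t ^ 2 * hσ + q ^ 2 * Real.cos_sq_add_sin_sq t

theorem metallic_norm_sq_mul_norm_sq :
    (p * σ * Real.cos t ^ 2 + q) * ((p * σ * Real.sin t ^ 2 + q) / q)
      = (σ * √(p ^ 2 * Real.sin (2 * t) ^ 2 + 4 * q) / (2 * √q)) ^ 2 := by
  have hqs : √q ^ 2 = q := Real.sq_sqrt hq.le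
  rw [div_pow, mul_pow, mul_pow, hqs, Real.sq_sqrt (by positivity), Real.sin_two_mul]
  field_simp
  linear_combination 4 * p * σ * q * Real.cos_sq_add_sin_sq t - 4 * q * hσ

end Metallic

theorem slant_angle_Z1_R4_general
    (p q : ℕ) (hq : 0 < q)
    (σ σ' : ℝ) (hσ : σ = ((p : ℝ) + Real.sqrt ((p : ℝ) ^ 2 + 4 * (q : ℝ))) / 2)
    (hσ' : σ' = (p : ℝ) - σ)
    (J : EuclideanSpace ℝ (Fin 4) →ₗ[ℝ] EuclideanSpace ℝ (Fin 4))
    (hJdef : ∀ x : EuclideanSpace ℝ (Fin 4),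
      J x = ![σ * x 0, σ' * x 1, σ * x 2, σ' * x 3])
    (t : ℝ) (Z₁ : EuclideanSpace ℝ (Fin 4))
    (hZ₁ : Z₁ = ![Real.cos t, (σ / Real.sqrt q) * Real.sin t, 0, 0]) :
    ⟪J Z₁, Z₁⟫ = σ * Real.cos (2 * t) ∧
    ‖Z₁‖ ^ 2 = ((p : ℝ) * σ * Real.sin t ^ 2 + q) / q ∧
    ‖J Z₁‖ ^ 2 = (p : ℝ) * σ * Real.cos t ^ 2 + q ∧
    ⟪J Z₁, Z₁⟫ / (‖J Z₁‖ * ‖Z₁‖)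
      = 2 * Real.sqrt q * Real.cos (2 * t)
        / Real.sqrt ((p : ℝ) ^ 2 * Real.sin (2 * t) ^ 2 + 4 * q) := by
  have hq : (0 : ℝ) < q := Nat.cast_pos.2 hq
  have hσsq : σ ^ 2 = p * σ + q := hσ ▸ metallicMean_sq (by positivity)
  have hσpos : 0 < σ := hσ ▸ metallicMean_pos (Nat.cast_nonneg p) hq
  subst hσ'
  have hinner : ⟪J Z₁, Z₁⟫ = σ * Real.cos (2 * t) := by
    simp only [EuclideanSpace.real_inner_fin_four, hJdef, hZ₁, Matrix.cons_val]
    linear_combination metallic_inner_eq hσsq hq t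
  have hZ : ‖Z₁‖ ^ 2 = (p * σ * Real.sin t ^ 2 + q) / q := by
    rw [← real_inner_self_eq_norm_sq]
    simp only [EuclideanSpace.real_inner_fin_four, hZ₁, Matrix.cons_val]
    linear_combination metallic_norm_sq hσsq hq t
  have hJZ : ‖J Z₁‖ ^ 2 = p * σ * Real.cos t ^ 2 + q := by
    rw [← real_inner_self_eq_norm_sq]
    simp only [EuclideanSpace.real_inner_fin_four, hJdef, hZ₁, Matrix.cons_val]
    linear_combination metallic_norm_sq_apply hσsq hq t
  have hprod : ‖J Z₁‖ * ‖Z₁‖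
      = σ * √((p : ℝ) ^ 2 * Real.sin (2 * t) ^ 2 + 4 * q) / (2 * √q) := by
    rw [← pow_left_inj₀ (by positivity) (by positivity) two_ne_zero, mul_pow, hJZ, hZ]
    exact metallic_norm_sq_mul_norm_sq hσsq hq t
  refine ⟨hinner, hZ, hJZ, ?_⟩
  rw [hinner, hprod]
  field_simp

/-- For the metallic structure `J(x₁, x₂, x₃, x₄) = (σx₁, σ̄x₂, σx₃, σ̄x₄)` on `ℝ⁴` and
`Z₁ = (cos t, (σ/√q)·sin t, 0, 0)`:
`⟪JZ₁, Z₁⟫ = σ·cos 2t`, `‖Z₁‖² = (pσ·sin²t + q)/q`, `‖JZ₁‖² = pσ·cos²t + q`, and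
`⟪JZ₁, Z₁⟫/(‖JZ₁‖·‖Z₁‖) = 2√q·cos 2t/√(p²·sin²2t + 4q)`. -/
theorem slant_angle_Z1_R4
    (p q : ℕ) (hp : 0 < p) (hq : 0 < q)
    (σ σ' : ℝ) (hσ : σ = ((p : ℝ) + Real.sqrt ((p : ℝ) ^ 2 + 4 * (q : ℝ))) / 2)
    (hσ' : σ' = (p : ℝ) - σ)
    (J : EuclideanSpace ℝ (Fin 4) →ₗ[ℝ] EuclideanSpace ℝ (Fin 4))
    (hJdef : ∀ x : EuclideanSpace ℝ (Fin 4),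
      J x = ![σ * x 0, σ' * x 1, σ * x 2, σ' * x 3])
    (t : ℝ) (Z₁ : EuclideanSpace ℝ (Fin 4))
    (hZ₁ : Z₁ = ![Real.cos t, (σ / Real.sqrt q) * Real.sin t, 0, 0]) :
    ⟪J Z₁, Z₁⟫ = σ * Real.cos (2 * t) ∧
    ‖Z₁‖ ^ 2 = ((p : ℝ) * σ * Real.sin t ^ 2 + q) / q ∧
    ‖J Z₁‖ ^ 2 = (p : ℝ) * σ * Real.cos t ^ 2 + q ∧
    ⟪J Z₁, Z₁⟫ / (‖J Z₁‖ * ‖Z₁‖)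
      = 2 * Real.sqrt q * Real.cos (2 * t)
        / Real.sqrt ((p : ℝ) ^ 2 * Real.sin (2 * t) ^ 2 + 4 * q) :=
  slant_angle_Z1_R4_general p q hq σ σ' hσ hσ' J hJdef t Z₁ hZ₁
end

section
/- Let p and q be positive integers, σ = (p + √(p² + 4q))/2, σ̄ = p − σ, and let J : ℝ⁵ → ℝ⁵ be the linear map J(x₁, x₂, x₃, x₄, x₅) = (σx₁, σx₂, σ̄x₃, σ̄x₄, σ̄x₅). For f > 0 and α, β ∈ (0, π/2) let Z₁ = (sin α, cos α, sin β, cos β, √(pσ/q)), Z₂ = (f·cos α, −f·sin α, 0, 0, 0), Z₃ = (0, 0, f·cos β, −f·sin β, 0). Then J Z₂ = σ·Z₂ and J Z₃ = σ̄·Z₃ (so span{Z₂, Z₃} is invariant under J), and JZ₁ is orthogonal to each of Z₁, Z₂, Z₃ (so span{Z₁} is anti-invariant: J maps it into the orthogonal complement of span{Z₁, Z₂, Z₃}). -/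
/-!
`J` is diagonal, so `Z₂` and `Z₃`, supported on its `σ`- and `σ̄`-eigenspaces, are eigenvectors,
and `⟪JZ₁, Z₁⟫ = σ + σ̄ + σ̄ · pσ/q = p + p · σσ̄/q = 0` because `σσ̄ = -q`.
-/

open scoped RealInnerProductSpace

theorem metallicMean_mul_sub {p q : ℝ} (h : 0 ≤ p ^ 2 + 4 * q) :
    metallicMean p q * (p - metallicMean p q) = -q := by
  unfold metallicMean
  linear_combination (-1 / 4 : ℝ) * Real.sq_sqrt h

theorem metallicMean_nonneg (p : ℝ) {q : ℝ} (hq : 0 ≤ q) : 0 ≤ metallicMean p q := by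
  have : |p| ≤ √(p ^ 2 + 4 * q) := Real.abs_le_sqrt (by linarith)
  unfold metallicMean
  linarith [neg_abs_le p]

section Diagonal

variable {ι : Type*} {J : EuclideanSpace ℝ ι →ₗ[ℝ] EuclideanSpace ℝ ι} {d : ι → ℝ}

theorem inner_map_eq_sum_of_diagonal [Fintype ι] (hJ : ∀ x i, J x i = d i * x i)
    (x y : EuclideanSpace ℝ ι) : ⟪J x, y⟫ = ∑ i, d i * x i * y i := by
  simp only [PiLp.inner_apply, RCLike.inner_apply, conj_trivial, hJ]
  exact Finset.sum_congr rfl fun i _ => mul_comm _ _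

theorem map_eq_smul_of_diagonal (hJ : ∀ x i, J x i = d i * x i) {x : EuclideanSpace ℝ ι}
    {c : ℝ} (hx : ∀ i, x i ≠ 0 → d i = c) : J x = c • x := by
  ext i
  rw [hJ, PiLp.smul_apply, smul_eq_mul]
  by_cases h : x i = 0
  · simp [h]
  · rw [hx i h]

end Diagonal

theorem warped_semiInvariant_R5_general
    (p q : ℕ) (hq : 0 < q)
    (σ σ' : ℝ) (hσ : σ = ((p : ℝ) + Real.sqrt ((p : ℝ) ^ 2 + 4 * (q : ℝ))) / 2)
    (hσ' : σ' = (p : ℝ) - σ)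
    (J : EuclideanSpace ℝ (Fin 5) →ₗ[ℝ] EuclideanSpace ℝ (Fin 5))
    (hJdef : ∀ x : EuclideanSpace ℝ (Fin 5),
      J x = ![σ * x 0, σ * x 1, σ' * x 2, σ' * x 3, σ' * x 4])
    (f α β : ℝ)
    (Z₁ Z₂ Z₃ : EuclideanSpace ℝ (Fin 5))
    (hZ₁ : Z₁ = ![Real.sin α, Real.cos α, Real.sin β, Real.cos β,
      Real.sqrt ((p : ℝ) * σ / q)])
    (hZ₂ : Z₂ = ![f * Real.cos α, -(f * Real.sin α), 0, 0, 0])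
    (hZ₃ : Z₃ = ![0, 0, f * Real.cos β, -(f * Real.sin β), 0]) :
    J Z₂ = σ • Z₂ ∧ J Z₃ = σ' • Z₃ ∧
    ⟪J Z₁, Z₁⟫ = 0 ∧ ⟪J Z₁, Z₂⟫ = 0 ∧ ⟪J Z₁, Z₃⟫ = 0 := by
  have hq' : (0 : ℝ) < q := by exact_mod_cast hq
  have hσσ' : σ * σ' = -q := hσ' ▸ hσ ▸ metallicMean_mul_sub (by positivity)
  have hpσ : √(p * σ / q) ^ 2 = p * σ / q :=
    Real.sq_sqrt (div_nonneg (mul_nonneg p.cast_nonneg (hσ ▸ metallicMean_nonneg _ hq'.le)) hq'.le)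
  have hJ : ∀ x i, J x i = ![σ, σ, σ', σ', σ'] i * x i := by
    intro x i
    fin_cases i <;> simp [hJdef]
  refine ⟨map_eq_smul_of_diagonal hJ ?_, map_eq_smul_of_diagonal hJ ?_, ?_, ?_, ?_⟩
  · intro i; fin_cases i <;> simp [hZ₂]
  · intro i; fin_cases i <;> simp [hZ₃]
  · rw [inner_map_eq_sum_of_diagonal hJ, Fin.sum_univ_five]
    calc _ = σ * (Real.sin α ^ 2 + Real.cos α ^ 2) + σ' * (Real.sin β ^ 2 + Real.cos β ^ 2)
          + σ' * √(p * σ / q) ^ 2 := by simp only [hZ₁, Matrix.cons_val]; ring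
    _ = σ + σ' + p * (σ * σ') / q := by
      rw [Real.sin_sq_add_cos_sq, Real.sin_sq_add_cos_sq, hpσ]; ring
    _ = 0 := by rw [hσσ', hσ']; field_simp; ring
  · rw [inner_map_eq_sum_of_diagonal hJ, Fin.sum_univ_five]
    simp only [hZ₁, hZ₂, Matrix.cons_val]
    ring
  · rw [inner_map_eq_sum_of_diagonal hJ, Fin.sum_univ_five]
    simp only [hZ₁, hZ₃, Matrix.cons_val]
    ring

/-- For the metallic structure `J(x₁,…,x₅) = (σx₁, σx₂, σ̄x₃, σ̄x₄, σ̄x₅)` on `ℝ⁵` and the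
frame `Z₁, Z₂, Z₃`: `JZ₂ = σ·Z₂`, `JZ₃ = σ̄·Z₃` (so `span{Z₂, Z₃}` is invariant), and
`JZ₁` is orthogonal to each of `Z₁, Z₂, Z₃` (so `span{Z₁}` is anti-invariant). -/
theorem warped_semiInvariant_R5
    (p q : ℕ) (hp : 0 < p) (hq : 0 < q)
    (σ σ' : ℝ) (hσ : σ = ((p : ℝ) + Real.sqrt ((p : ℝ) ^ 2 + 4 * (q : ℝ))) / 2)
    (hσ' : σ' = (p : ℝ) - σ)
    (J : EuclideanSpace ℝ (Fin 5) →ₗ[ℝ] EuclideanSpace ℝ (Fin 5))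
    (hJdef : ∀ x : EuclideanSpace ℝ (Fin 5),
      J x = ![σ * x 0, σ * x 1, σ' * x 2, σ' * x 3, σ' * x 4])
    (f α β : ℝ) (hf : 0 < f) (hα : α ∈ Set.Ioo 0 (Real.pi / 2))
    (hβ : β ∈ Set.Ioo 0 (Real.pi / 2))
    (Z₁ Z₂ Z₃ : EuclideanSpace ℝ (Fin 5))
    (hZ₁ : Z₁ = ![Real.sin α, Real.cos α, Real.sin β, Real.cos β,
      Real.sqrt ((p : ℝ) * σ / q)])
    (hZ₂ : Z₂ = ![f * Real.cos α, -(f * Real.sin α), 0, 0, 0])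
    (hZ₃ : Z₃ = ![0, 0, f * Real.cos β, -(f * Real.sin β), 0]) :
    J Z₂ = σ • Z₂ ∧ J Z₃ = σ' • Z₃ ∧
    ⟪J Z₁, Z₁⟫ = 0 ∧ ⟪J Z₁, Z₂⟫ = 0 ∧ ⟪J Z₁, Z₃⟫ = 0 :=
  warped_semiInvariant_R5_general p q hq σ σ' hσ hσ' J hJdef f α β Z₁ Z₂ Z₃ hZ₁ hZ₂ hZ₃
end
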